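/- arXiv:2210.17447 — 4 statements merged into one kernel-verified Lean document; each statement's English description precedes it below -/
import Mathlib

section
/- Let H be a finitely generated module over the Laurent polynomial ring ℤ[t,t⁻¹]. If multiplication by (t−1) is a bijection H → H, then H is a torsion ℤ[t,t⁻¹]-module, i.e., every element of H is annihilated by some nonzero element of ℤ[t,t⁻¹]. -/
open LaurentPolynomial

noncomputable def evalOne : LaurentPolynomial ℤ →ₐ[ℤ] ℤ :=
  AddMonoidAlgebra.lift ℤ ℤ ℤ 1

lemma evalOne_T (n : ℤ) : evalOne (T n) = 1 := by
  rw [evalOne, T, AddMonoidAlgebra.lift_single]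
  simp

/-- If `H` is a finitely generated module over `ℤ[t,t⁻¹]` on which multiplication by
`t - 1` is bijective, then `H` is a torsion module. -/
theorem stmt_0 (H : Type*) [AddCommGroup H] [Module (LaurentPolynomial ℤ) H]
    [Module.Finite (LaurentPolynomial ℤ) H]
    (hbij : Function.Bijective (fun x : H => (T 1 - 1 : LaurentPolynomial ℤ) • x)) :
    ∀ x : H, ∃ r : LaurentPolynomial ℤ, r ≠ 0 ∧ r • x = 0 := by
  set I : Ideal (LaurentPolynomial ℤ) := Ideal.span {T 1 - 1}
  have hle : (⊤ : Submodule (LaurentPolynomial ℤ) H) ≤ I • ⊤ := by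
    intro x _
    obtain ⟨y, hy⟩ := hbij.2 x
    simp only at hy
    rw [← hy]
    exact Submodule.smul_mem_smul (Ideal.subset_span rfl) trivial
  obtain ⟨r, hr1, hr0⟩ := Submodule.exists_sub_one_mem_and_smul_eq_zero_of_fg_of_le_smul I ⊤
    (Module.Finite.fg_top) hle
  intro x
  refine ⟨r, ?_, hr0 x trivial⟩
  intro h
  obtain ⟨s, hs⟩ := Ideal.mem_span_singleton'.mp hr1
  have := congrArg evalOne hs
  simp [h, evalOne_T] at this
end

section
/- Let H be a finitely generated module over ℤ[t,t⁻¹] such that multiplication by (t−1) is surjective on H. Then the image of the 0th Fitting ideal of H under the evaluation ring homomorphism ℤ[t,t⁻¹] → ℤ sending t to 1 generates the unit ideal of ℤ. In particular, any generator of a principal 0th Fitting ideal (an Alexander polynomial) evaluates to ±1 at t = 1. -/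
open Matrix

/-- Cauchy–Binet-type expansion: the determinant of a product `M * B` is a
linear combination of the maximal (row-choice) minors of `B`. -/
theorem det_mul_expand {R : Type*} [CommRing R] {n m : ℕ}
    (M : Matrix (Fin n) (Fin m) R) (B : Matrix (Fin m) (Fin n) R) :
    (M * B).det = ∑ g : Fin n → Fin m, (∏ i, M i (g i)) * (B.submatrix g id).det := by
  have h1 : (M * B).det =
      (Matrix.detRowAlternating (fun i : Fin n => ∑ k : Fin m, M i k • B k) : R) := by
    congr 1
    ext i j
    simp [Matrix.mul_apply]
  rw [h1]
  rw [show (fun i : Fin n => ∑ k : Fin m, M i k • B k)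
      = (fun i : Fin n => ∑ k : Fin m, (fun i k => M i k • B k) i k) from rfl]
  have h2 := (Matrix.detRowAlternating (R := R) (n := Fin n)).toMultilinearMap.map_sum
      (fun (i : Fin n) (k : Fin m) => M i k • B k)
  rw [show ((Matrix.detRowAlternating (R := R) (n := Fin n)).toMultilinearMap :
      MultilinearMap R (fun _ : Fin n => Fin n → R) R)
      = ⇑(Matrix.detRowAlternating (R := R) (n := Fin n)) from rfl] at h2
  rw [h2]
  refine Finset.sum_congr rfl fun g _ => ?_
  rw [show (fun i : Fin n => M i (g i) • B (g i)) = fun i => (M i (g i)) • (fun i => B (g i)) i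
    from rfl]
  rw [show (detRowAlternating fun i : Fin n => M i (g i) • (fun i => B (g i)) i)
      = (Matrix.detRowAlternating (R := R) (n := Fin n)).toMultilinearMap
          (fun i : Fin n => M i (g i) • (fun i => B (g i)) i) from rfl]
  rw [MultilinearMap.map_smul_univ]
  rfl

open LaurentPolynomial

/-- If `H` is a finitely generated module over `ℤ[t,t⁻¹]`, presented by an `n × m`
matrix `A` (with `n` generators and `m` relations), on which multiplication by `t - 1`
is surjective, then the image under the augmentation `ε : ℤ[t,t⁻¹] → ℤ`, `t ↦ 1`, of
the 0th Fitting ideal (generated by the `n × n` minors of `A`) is the unit ideal of `ℤ`.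
In particular any generator of a principal 0th Fitting ideal evaluates to `±1` at `t = 1`. -/
theorem stmt_1 (H : Type*) [AddCommGroup H] [Module (LaurentPolynomial ℤ) H]
    (hsurj : Function.Surjective (fun x : H => (T 1 - 1 : LaurentPolynomial ℤ) • x))
    (n m : ℕ) (A : Matrix (Fin n) (Fin m) (LaurentPolynomial ℤ))
    (π : (Fin n → LaurentPolynomial ℤ) →ₗ[LaurentPolynomial ℤ] H)
    (hπ : Function.Surjective π)
    (hker : LinearMap.ker π = LinearMap.range (Matrix.toLin' A))
    (ε : LaurentPolynomial ℤ →+* ℤ) (hε : ε (T 1) = 1)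
    (Fit : Ideal (LaurentPolynomial ℤ))
    (hFit : Fit = Ideal.span {d | ∃ g : Fin n → Fin m, d = (A.submatrix id g).det}) :
    Ideal.map ε Fit = ⊤ ∧
      ∀ Δ : LaurentPolynomial ℤ, Fit = Ideal.span {Δ} → ε Δ = 1 ∨ ε Δ = -1 := by
  set B : Matrix (Fin n) (Fin m) ℤ := A.map ε with hB
  have hε0 : ε (T 1 - 1) = 0 := by rw [map_sub, hε, _root_.map_one, sub_self]
  -- each standard basis vector is in the image of `B.mulVec`
  have hsingle : ∀ i : Fin n, ∃ w : Fin m → ℤ, B.mulVec w = Pi.single i 1 := by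
    intro i
    obtain ⟨x, hx⟩ := hsurj (π (Pi.single i 1))
    obtain ⟨v, hv⟩ := hπ x
    have hx' : (T 1 - 1 : LaurentPolynomial ℤ) • x = π (Pi.single i 1) := hx
    have hmem : (Pi.single i 1 - (T 1 - 1 : LaurentPolynomial ℤ) • v) ∈ LinearMap.ker π := by
      simp only [LinearMap.mem_ker, map_sub, _root_.map_smul, hv]
      rw [hx']
      exact sub_self _
    rw [hker] at hmem
    obtain ⟨w, hw⟩ := hmem
    rw [Matrix.toLin'_apply] at hw
    refine ⟨fun k => ε (w k), ?_⟩
    funext j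
    have := congrFun hw j
    have happ : ε ((A.mulVec w) j) = ε ((Pi.single i 1 : Fin n → LaurentPolynomial ℤ) j)
        - ε (T 1 - 1) * ε (v j) := by
      rw [this]; simp [Pi.smul_apply, smul_eq_mul, map_sub, _root_.map_mul]
    rw [hε0, zero_mul, sub_zero] at happ
    have hlhs : (B.mulVec fun k => ε (w k)) j = ε ((A.mulVec w) j) := by
      simp [Matrix.mulVec, dotProduct, hB, map_sum, _root_.map_mul]
    rw [hlhs, happ]
    by_cases hji : j = i
    · subst hji; simp
    · simp [Pi.single_apply, hji]
  -- hence `B.mulVec` is surjective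
  have hBsurj : Function.Surjective B.mulVec := by
    intro y
    choose w hw using hsingle
    refine ⟨∑ i, y i • w i, ?_⟩
    have : B.mulVecLin (∑ i, y i • w i) = ∑ i, y i • B.mulVecLin (w i) := by
      rw [map_sum]; exact Finset.sum_congr rfl fun i _ => by rw [_root_.map_smul]
    have h2 : B.mulVec (∑ i, y i • w i) = ∑ i, y i • B.mulVec (w i) := this
    rw [h2]
    funext j
    simp only [Finset.sum_apply, Pi.smul_apply]
    rw [Finset.sum_congr rfl fun i _ => by rw [hw i]]
    simp [Pi.single_apply, Finset.sum_ite_eq, smul_eq_mul]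
  -- right inverse and Cauchy–Binet
  obtain ⟨C, hC⟩ := Matrix.mulVec_surjective_iff_exists_right_inverse.mp hBsurj
  have hCB : (Cᵀ * Bᵀ) = 1 := by rw [← Matrix.transpose_mul, hC, Matrix.transpose_one]
  have hdet : (1 : ℤ) =
      ∑ g : Fin n → Fin m, (∏ i, Cᵀ i (g i)) * ((Bᵀ).submatrix g id).det := by
    rw [← det_mul_expand, hCB, Matrix.det_one]
  have hminor : ∀ g : Fin n → Fin m,
      ((Bᵀ).submatrix g id).det = ε ((A.submatrix id g).det) := by
    intro g
    have h3 : (Bᵀ).submatrix g id = ((A.submatrix id g).map ε)ᵀ := rfl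
    rw [h3, Matrix.det_transpose, ← RingHom.mapMatrix_apply, ← RingHom.map_det]
  have hmain : Ideal.map ε Fit = ⊤ := by
    rw [hFit, Ideal.map_span, Ideal.eq_top_iff_one]
    rw [show (1 : ℤ) = ∑ g : Fin n → Fin m,
        (∏ i, Cᵀ i (g i)) * ((Bᵀ).submatrix g id).det from hdet]
    refine Ideal.sum_mem _ fun g _ => Ideal.mul_mem_left _ _ ?_
    rw [hminor g]
    exact Ideal.subset_span ⟨(A.submatrix id g).det, ⟨g, rfl⟩, rfl⟩
  refine ⟨hmain, fun Δ hΔ => ?_⟩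
  rw [hΔ, Ideal.map_span, Set.image_singleton, Ideal.span_singleton_eq_top] at hmain
  exact Int.isUnit_iff.mp hmain
end

section
/- Let H be a finitely generated module over ℤ[t,t⁻¹] on which multiplication by (t−1) is bijective. Then the ℤ-torsion subgroup T_ℤH = {x ∈ H : n·x = 0 for some nonzero integer n} is finite. -/
/-!
The `ℤ`-torsion `τ` of `H` is a `ℤ[t,t⁻¹]`-submodule, finitely generated because `ℤ[t,t⁻¹]` is
noetherian, hence killed by a single integer `n ≠ 0`. Bijectivity of `t - 1` gives
`τ = (t - 1) τ`, so Nakayama's lemma provides `r ≡ 1 mod (t - 1)` with `r τ = 0`. Filtering `τ`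
by the multiples `p τ` for the prime factors `p` of `n` reduces finiteness to that of the rings
`ℤ[t,t⁻¹] ⧸ (p, r)`. Such a ring is an `𝔽_p`-algebra generated by `t` and `t⁻¹`, and `t` is a
root of a nonzero polynomial over `𝔽_p` because `r(1) = 1`; so it is finite.
-/

open LaurentPolynomial Polynomial
open scoped nonZeroDivisors Pointwise

instance LaurentPolynomial.instIsNoetherianRing {R : Type*} [CommRing R] [IsNoetherianRing R] :
    IsNoetherianRing R[T;T⁻¹] :=
  IsLocalization.isNoetherianRing (Submonoid.powers (X : R[X])) _ inferInstance

theorem LaurentPolynomial.adjoin_T_one_T_neg_one (R : Type*) [CommSemiring R] :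
    Algebra.adjoin R {(T 1 : R[T;T⁻¹]), T (-1)} = ⊤ := by
  set S := Algebra.adjoin R {(T 1 : R[T;T⁻¹]), T (-1)}
  have hT : ∀ n : ℤ, (T n : R[T;T⁻¹]) ∈ S := by
    intro n
    induction n using Int.induction_on with
    | zero => exact T_zero (R := R) ▸ S.one_mem
    | succ n ih => rw [T_add]; exact S.mul_mem ih (Algebra.subset_adjoin (by simp))
    | pred n ih =>
      rw [sub_eq_add_neg, T_add]; exact S.mul_mem ih (Algebra.subset_adjoin (by simp))
  refine Algebra.eq_top_iff.mpr fun f => ?_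
  induction f using LaurentPolynomial.induction_on' with
  | add p q hp hq => exact S.add_mem hp hq
  | C_mul_T n a => rw [← smul_eq_C_mul]; exact S.smul_mem (hT n) a

theorem LaurentPolynomial.adjoin_image_T_eq_top_of_surjective {R k A : Type*} [CommSemiring R]
    [CommSemiring k] [Semiring A] [Algebra R k] [Algebra R A] [Algebra k A] [IsScalarTower R k A]
    (φ : R[T;T⁻¹] →ₐ[R] A) (hφ : Function.Surjective φ) :
    Algebra.adjoin k {φ (T 1), φ (T (-1))} = ⊤ := by
  have h := congrArg (Subalgebra.map φ) (adjoin_T_one_T_neg_one R)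
  rw [AlgHom.map_adjoin, Set.image_pair, Algebra.map_top, (AlgHom.range_eq_top φ).mpr hφ] at h
  have hle : Algebra.adjoin R {φ (T 1), φ (T (-1))} ≤
      (Algebra.adjoin k {φ (T 1), φ (T (-1))}).restrictScalars R :=
    Algebra.adjoin_le Algebra.subset_adjoin
  rw [h] at hle
  exact eq_top_iff.mpr fun z _ => hle Algebra.mem_top

theorem LaurentPolynomial.isAlgebraic_T_one_of_map_eq_zero {k A : Type*} [CommRing k]
    [Nontrivial k] [CommRing A] [Algebra k A] [IsScalarTower ℤ k A] {r : ℤ[T;T⁻¹]}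
    (hr : r - 1 ∈ Ideal.span {T 1 - 1}) (φ : ℤ[T;T⁻¹] →ₐ[ℤ] A) (hφ : φ r = 0) :
    IsAlgebraic k (φ (T 1)) := by
  obtain ⟨d, g, hg⟩ := exists_T_pow r
  refine ⟨g.map (algebraMap ℤ k), fun h0 => ?_, ?_⟩
  · -- evaluating at `t = 1` shows that `g` reduces to a polynomial with value `1` at `1`
    let ε := LaurentPolynomial.eval₂ (algebraMap ℤ k) 1
    have hεr : ε (r - 1) = 0 := by
      simpa [ε] using map_dvd ε (Ideal.mem_span_singleton.mp hr)
    rw [map_sub, map_one, sub_eq_zero] at hεr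
    have hg1 := congrArg ε hg
    simp only [ε, eval₂_toLaurent, map_mul, hεr, eval₂_T, one_zpow, Units.val_one, mul_one]
      at hg1
    have h1 := congrArg (Polynomial.eval 1) h0
    rw [Polynomial.eval_map, hg1, eval_zero] at h1
    exact one_ne_zero h1
  · have hT : φ (T 1) = (φ.comp toLaurentAlg) X := by simp
    rw [aeval_map_algebraMap, hT, aeval_algHom_apply, aeval_X_left_apply, AlgHom.comp_apply,
      toLaurentAlg_apply, hg, map_mul, hφ, zero_mul]

theorem Algebra.finite_of_adjoin_eq_top_of_isIntegral {k A : Type*} [CommRing k] [Finite k]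
    [CommRing A] [Algebra k A] {s : Set A} (hs : s.Finite) (hint : ∀ x ∈ s, IsIntegral k x)
    (htop : Algebra.adjoin k s = ⊤) : Finite A := by
  have := Algebra.finite_adjoin_of_finite_of_isIntegral hs hint
  rw [htop] at this
  have := Module.finite_of_finite k (M := (⊤ : Subalgebra k A))
  exact Finite.of_equiv _ (Subalgebra.topEquiv (R := k) (A := A)).toEquiv

theorem LaurentPolynomial.finite_quotient_span_prime {p : ℕ} (hp : p.Prime) {r : ℤ[T;T⁻¹]}
    (hr : r - 1 ∈ Ideal.span {T 1 - 1}) :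
    Finite (ℤ[T;T⁻¹] ⧸ Ideal.span {(p : ℤ[T;T⁻¹]), r}) := by
  have : Fact p.Prime := ⟨hp⟩
  set I := Ideal.span {(p : ℤ[T;T⁻¹]), r}
  set π := Ideal.Quotient.mkₐ ℤ I
  have hπ : ∀ a ∈ ({(p : ℤ[T;T⁻¹]), r} : Set ℤ[T;T⁻¹]), π a = 0 := fun a ha =>
    Ideal.Quotient.eq_zero_iff_mem.mpr (Ideal.subset_span ha)
  have hpI : (p : ℤ[T;T⁻¹] ⧸ I) = 0 := by rw [← map_natCast π]; exact hπ _ (by simp)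
  let := ZMod.algebra' (ℤ[T;T⁻¹] ⧸ I) (ringChar _) (ringChar.dvd hpI)
  have : IsScalarTower ℤ (ZMod p) (ℤ[T;T⁻¹] ⧸ I) := .of_algebraMap_eq' (RingHom.ext_int _ _)
  let : Invertible (π (T 1)) :=
    ⟨π (T (-1)), by rw [← map_mul, ← T_add]; simp, by rw [← map_mul, ← T_add]; simp⟩
  have hx : IsAlgebraic (ZMod p) (π (T 1)) :=
    isAlgebraic_T_one_of_map_eq_zero (k := ZMod p) hr π (hπ r (by simp))
  refine Algebra.finite_of_adjoin_eq_top_of_isIntegral (k := ZMod p) (s := {π (T 1), π (T (-1))})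
    (by simp) ?_ (adjoin_image_T_eq_top_of_surjective π (Ideal.Quotient.mkₐ_surjective ℤ I))
  simp only [Set.mem_insert_iff, Set.mem_singleton_iff, forall_eq_or_imp, forall_eq]
  exact ⟨hx.isIntegral, hx.invOf.isIntegral⟩

theorem Submodule.finite_of_finite_quotient {R M : Type*} [Ring R] [AddCommGroup M] [Module R M]
    (N : Submodule R M) [Finite N] [Finite (M ⧸ N)] : Finite M :=
  have : Finite (M ⧸ N.toAddSubgroup) := ‹Finite (M ⧸ N)›
  have : Finite N.toAddSubgroup := ‹Finite N›
  Finite.of_equiv _ (AddSubgroup.addGroupEquivQuotientProdAddSubgroup (s := N.toAddSubgroup)).symm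

theorem Module.finite_of_le_annihilator {A M : Type*} [CommRing A] [AddCommGroup M] [Module A M]
    [Module.Finite A M] {I : Ideal A} [Finite (A ⧸ I)] (hI : I ≤ Module.annihilator A M) :
    Finite M := by
  have hM : Module.IsTorsionBySet A M I := fun x a => Module.mem_annihilator.mp (hI a.2) x
  let := hM.module
  have : Module.Finite (A ⧸ I) M := .of_restrictScalars_finite A _ M
  exact Module.finite_of_finite (A ⧸ I)

theorem LaurentPolynomial.finite_of_natCast_mem_annihilator {r : ℤ[T;T⁻¹]}
    (hr : r - 1 ∈ Ideal.span {T 1 - 1}) {n : ℕ} (hn : n ≠ 0) (M : Type*) [AddCommGroup M]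
    [Module ℤ[T;T⁻¹] M] [Module.Finite ℤ[T;T⁻¹] M]
    (hnM : (n : ℤ[T;T⁻¹]) ∈ Module.annihilator ℤ[T;T⁻¹] M)
    (hrM : r ∈ Module.annihilator ℤ[T;T⁻¹] M) : Finite M := by
  induction n using induction_on_primes generalizing M with
  | zero => exact absurd rfl hn
  | one =>
    have : Subsingleton M := ⟨fun x y => by
      simp only [Module.mem_annihilator, Nat.cast_one, one_smul] at hnM; rw [hnM x, hnM y]⟩
    infer_instance
  | prime_mul p a hp ih =>
    set N := (p : ℤ[T;T⁻¹]) • (⊤ : Submodule ℤ[T;T⁻¹] M)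
    have : Finite N := by
      refine ih (right_ne_zero_of_mul hn) N (Module.mem_annihilator.mpr fun ⟨y, hy⟩ => ?_)
        (N.subtype.annihilator_le_of_injective N.injective_subtype hrM)
      obtain ⟨z, -, rfl⟩ := (Submodule.mem_smul_pointwise_iff_exists _ _ _).mp hy
      refine Subtype.ext ?_
      change (a : ℤ[T;T⁻¹]) • (p : ℤ[T;T⁻¹]) • z = 0
      rw [smul_smul, ← Nat.cast_mul, mul_comm]
      exact Module.mem_annihilator.mp hnM z
    have : Finite (M ⧸ N) := by
      have := finite_quotient_span_prime hp hr
      refine Module.finite_of_le_annihilator (I := Ideal.span {(p : ℤ[T;T⁻¹]), r})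
        (Ideal.span_le.mpr (Set.pair_subset ?_ (N.mkQ.annihilator_le_of_surjective
          N.mkQ_surjective hrM)))
      refine Module.mem_annihilator.mpr fun q => Submodule.Quotient.induction_on N q fun x => ?_
      rw [← Submodule.Quotient.mk_smul, Submodule.Quotient.mk_eq_zero]
      exact Submodule.smul_mem_pointwise_smul x _ ⊤ trivial
    exact N.finite_of_finite_quotient

theorem Submodule.exists_smul_eq_zero_of_fg_le_torsion' {R M S : Type*} [CommSemiring R]
    [AddCommMonoid M] [Module R M] [CommMonoid S] [DistribMulAction S M] [SMulCommClass S R M]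
    {N : Submodule R M} (hN : N.FG) (hle : N ≤ torsion' R M S) :
    ∃ a : S, ∀ x ∈ N, a • x = 0 := by
  classical
  obtain ⟨s, rfl⟩ := hN
  choose a ha using fun x : s => (mem_torsion'_iff S _).mp (hle (subset_span x.2))
  refine ⟨∏ x, a x, fun x hx => ?_⟩
  induction hx using span_induction with
  | mem y hy =>
    rw [← Finset.prod_erase_mul _ _ (Finset.mem_univ ⟨y, hy⟩), mul_smul, ha, smul_zero]
  | zero => exact smul_zero _
  | add y z _ _ hy hz => rw [smul_add, hy, hz, add_zero]
  | smul c y _ hy => rw [smul_comm, hy, smul_zero]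

theorem Submodule.torsion'_le_span_singleton_smul {R M S : Type*} [CommRing R] [AddCommGroup M]
    [Module R M] [CommMonoid S] [DistribMulAction S M] [SMulCommClass S R M] {a : R}
    (ha : Function.Bijective fun x : M => a • x) :
    torsion' R M S ≤ Ideal.span {a} • torsion' R M S := by
  intro x ⟨s, hs⟩
  obtain ⟨y, rfl⟩ := ha.2 x
  refine smul_mem_smul (Ideal.mem_span_singleton_self a) ⟨s, ha.1 ?_⟩
  change a • s • y = a • 0
  rw [smul_zero, ← smul_comm, hs]

open LaurentPolynomial in
/-- If `H` is a finitely generated module over `ℤ[t,t⁻¹]` on which multiplication by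
`t - 1` is bijective, then the `ℤ`-torsion subgroup of `H` is finite. -/
theorem stmt_2 (H : Type*) [AddCommGroup H] [Module (LaurentPolynomial ℤ) H]
    [Module.Finite (LaurentPolynomial ℤ) H]
    (hbij : Function.Bijective (fun x : H => (T 1 - 1 : LaurentPolynomial ℤ) • x)) :
    Set.Finite {x : H | ∃ n : ℤ, n ≠ 0 ∧ n • x = 0} := by
  set tors := Submodule.torsion' ℤ[T;T⁻¹] H ℤ⁰
  have htors : {x : H | ∃ n : ℤ, n ≠ 0 ∧ n • x = 0} = tors := by
    ext x; simp [tors, mem_nonZeroDivisors_iff_ne_zero, Submonoid.smul_def]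
  have hfg : tors.FG := IsNoetherian.noetherian tors
  obtain ⟨r, hr, hrT⟩ := Submodule.exists_sub_one_mem_and_smul_eq_zero_of_fg_of_le_smul _ tors
    hfg (Submodule.torsion'_le_span_singleton_smul hbij)
  obtain ⟨n, hn⟩ := Submodule.exists_smul_eq_zero_of_fg_le_torsion' hfg le_rfl
  have hnT : (((n : ℤ).natAbs : ℕ) : ℤ[T;T⁻¹]) ∈ Module.annihilator ℤ[T;T⁻¹] tors :=
    Module.mem_annihilator.mpr fun x => Subtype.ext <| by
      rw [Submodule.coe_smul, ← Int.cast_natCast, ← Int.sign_mul_self_eq_natAbs,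
        Int.cast_smul_eq_zsmul, mul_smul, ← Submonoid.smul_def, hn x x.2, smul_zero,
        Submodule.coe_zero]
  have hrT' : r ∈ Module.annihilator ℤ[T;T⁻¹] tors :=
    Module.mem_annihilator.mpr fun x => Subtype.ext (hrT x x.2)
  rw [htors]
  exact Set.finite_coe_iff.mp (finite_of_natCast_mem_annihilator hr
    (Int.natAbs_ne_zero.mpr (nonZeroDivisors.coe_ne_zero n)) tors hnT hrT')
end

section
/- Let f ∈ ℤ[t,t⁻¹] be a Laurent polynomial with f(1) = 1 or f(1) = −1, and let H = ℤ[t,t⁻¹]/(f) be the cyclic module it presents. Then multiplication by (t−1) is a bijection on H. Consequently H is a finitely generated torsion ℤ[t,t⁻¹]-module on which (t−1) acts invertibly, with order f. -/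
/-!
Modulo `t - 1` every Laurent polynomial `p` is congruent to the constant `ε p`, so
`f ≡ ε f = ±1`. Hence in `ℤ[t,t⁻¹]/(f)` the product of `t - 1` with the cofactor of `f - ε f`
is the unit `-ε f`, and `t - 1` is invertible there.
-/

open LaurentPolynomial

namespace LaurentPolynomial

variable {R : Type*} [CommRing R]

theorem T_one_sub_one_dvd_T_sub_one (n : ℤ) : (T 1 - 1 : R[T;T⁻¹]) ∣ T n - 1 := by
  have hnat : ∀ k : ℕ, (T 1 - 1 : R[T;T⁻¹]) ∣ T k - 1 := fun k => by
    simpa [T_pow] using sub_one_dvd_pow_sub_one (T 1 : R[T;T⁻¹]) k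
  obtain ⟨k, rfl | rfl⟩ := Int.eq_nat_or_neg n
  · exact hnat k
  · have hneg : (T (-k) - 1 : R[T;T⁻¹]) = -T (-k) * (T k - 1) := by
      rw [neg_mul, mul_sub, ← T_add, neg_add_cancel, T_zero, mul_one, neg_sub]
    rw [hneg]
    exact dvd_mul_of_dvd_right (hnat k) _

variable (ε : R[T;T⁻¹] →+* R) (hC : ε.comp C = RingHom.id R) (hT : ε (T 1) = 1)
include hC hT

theorem T_one_sub_one_dvd_sub_C (p : R[T;T⁻¹]) : (T 1 - 1 : R[T;T⁻¹]) ∣ p - C (ε p) := by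
  have hεC (a : R) : ε (C a) = a := RingHom.congr_fun hC a
  have hεT (n : ℤ) : ε (T n) = 1 := by
    obtain ⟨g, hg⟩ := T_one_sub_one_dvd_T_sub_one (R := R) n
    simpa [hT, sub_eq_zero] using congrArg ε hg
  induction p using LaurentPolynomial.induction_on' with
  | add p q hp hq =>
    rw [map_add, map_add, add_sub_add_comm]
    exact dvd_add hp hq
  | C_mul_T n a =>
    rw [map_mul, hεC, hεT, mul_one, ← mul_one (C a), mul_assoc, one_mul, ← mul_sub]
    exact dvd_mul_of_dvd_right (T_one_sub_one_dvd_T_sub_one n) _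

theorem isUnit_mk_T_one_sub_one {f : R[T;T⁻¹]} (hf : IsUnit (ε f)) :
    IsUnit (Ideal.Quotient.mk (Ideal.span {f}) (T 1 - 1)) := by
  obtain ⟨g, hg⟩ := T_one_sub_one_dvd_sub_C ε hC hT f
  have hfg : Ideal.Quotient.mk (Ideal.span {f}) ((T 1 - 1) * g)
      = -Ideal.Quotient.mk (Ideal.span {f}) (C (ε f)) := by
    rw [← hg, map_sub, Ideal.Quotient.eq_zero_iff_mem.mpr (Ideal.mem_span_singleton_self f),
      zero_sub]
  rw [map_mul] at hfg
  exact isUnit_of_mul_isUnit_left (hfg ▸ ((hf.map C).map (Ideal.Quotient.mk _)).neg)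

end LaurentPolynomial

/-- Let `f ∈ ℤ[t,t⁻¹]` with `f(1) = ±1` (evaluation at `1` being the augmentation
`ε : ℤ[t,t⁻¹] → ℤ`, `t ↦ 1`), and let `H = ℤ[t,t⁻¹]/(f)`. Then multiplication by
`t - 1` is a bijection on `H`; consequently `H` is a finitely generated torsion
`ℤ[t,t⁻¹]`-module on which `t - 1` acts invertibly, with order `f` (its annihilator
is the ideal generated by `f`). -/
theorem stmt_11 (f : LaurentPolynomial ℤ)
    (ε : LaurentPolynomial ℤ →+* ℤ) (hε : ε (T 1) = 1)
    (hf : ε f = 1 ∨ ε f = -1) :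
    Function.Bijective
      (fun x : LaurentPolynomial ℤ ⧸ Ideal.span {f} =>
        (T 1 - 1 : LaurentPolynomial ℤ) • x) ∧
    Module.Finite (LaurentPolynomial ℤ) (LaurentPolynomial ℤ ⧸ Ideal.span {f}) ∧
    (∀ x : LaurentPolynomial ℤ ⧸ Ideal.span {f},
      ∃ r : LaurentPolynomial ℤ, r ≠ 0 ∧ r • x = 0) ∧
    Module.annihilator (LaurentPolynomial ℤ) (LaurentPolynomial ℤ ⧸ Ideal.span {f}) =
      Ideal.span {f} := by
  have hunit : IsUnit (ε f) := Int.isUnit_iff.mpr hf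
  have hann := Ideal.annihilator_quotient (I := Ideal.span {f})
  refine ⟨(isUnit_mk_T_one_sub_one ε (RingHom.ext_int _ _) hε hunit).smul_bijective,
    inferInstance, fun x => ⟨f, ?_, ?_⟩, hann⟩
  · rintro rfl
    simp at hunit
  · exact Module.mem_annihilator.mp (by rw [hann]; exact Ideal.mem_span_singleton_self f) x
end
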